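/- arXiv:2004.08446 — 6 statements merged into one kernel-verified Lean document; each statement's English description precedes it below -/
import Mathlib

section
/- Let n1, n2, n3 be integers with n1 ≥ 2, n2 ≥ 1 and n3 ≥ 4. Then for every quadruple of integers (x1, x2, x3, x4), not all zero, one has 3*x1^2 + 2*n1*x2^2 + (2*n2+1)*x3^2 + (2*n3+1)*x4^2 + 2*x1*x3 + 2*x1*x4 ≥ 3. Equivalently, this quantity equals x1^2 + 2*n1*x2^2 + 2*n2*x3^2 + 2*n3*x4^2 + (x1+x3)^2 + (x1+x4)^2 and is at least 3 whenever (x1,x2,x3,x4) ≠ (0,0,0,0). -/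
/-!
Regroup the form as `x₁² + 2n₁x₂² + (2n₂x₃² + (x₁+x₃)²) + (2n₃x₄² + (x₁+x₄)²)`.
If `x₁ ≠ 0`, then `x₁²` and both brackets are at least `1`; if `x₁ = 0`, the
form is diagonal with all coefficients at least `3`.
-/

lemma le_mul_sq_of_ne_zero {k c x : ℤ} (hk : k ≤ c) (hc : 0 ≤ c) (hx : x ≠ 0) :
    k ≤ c * x ^ 2 := by
  have hx2 : 1 ≤ x ^ 2 := sq_pos_of_ne_zero hx
  exact hk.trans (le_mul_of_one_le_right hc hx2)

lemma le_mul_sq_add_mul_sq_add_mul_sq {k a b c x y z : ℤ} (hk : 0 ≤ k) (ha : k ≤ a)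
    (hb : k ≤ b) (hc : k ≤ c) (h : ¬(x = 0 ∧ y = 0 ∧ z = 0)) :
    k ≤ a * x ^ 2 + b * y ^ 2 + c * z ^ 2 := by
  have hax := mul_nonneg (hk.trans ha) (sq_nonneg x)
  have hby := mul_nonneg (hk.trans hb) (sq_nonneg y)
  have hcz := mul_nonneg (hk.trans hc) (sq_nonneg z)
  obtain hx | hy | hz : x ≠ 0 ∨ y ≠ 0 ∨ z ≠ 0 := by tauto
  · linarith [le_mul_sq_of_ne_zero ha (hk.trans ha) hx]
  · linarith [le_mul_sq_of_ne_zero hb (hk.trans hb) hy]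
  · linarith [le_mul_sq_of_ne_zero hc (hk.trans hc) hz]

lemma one_le_mul_sq_add_add_sq {c a : ℤ} (hc : 1 ≤ c) (ha : a ≠ 0) (b : ℤ) :
    1 ≤ c * b ^ 2 + (a + b) ^ 2 := by
  by_cases hab : a + b = 0
  · have hb : b ≠ 0 := fun hb => ha (by omega)
    linarith [le_mul_sq_of_ne_zero hc (by omega) hb, sq_nonneg (a + b)]
  · have hab2 : 1 ≤ (a + b) ^ 2 := sq_pos_of_ne_zero hab
    linarith [mul_nonneg (by omega : 0 ≤ c) (sq_nonneg b)]

/-- Case 3 of Lemma 3.3: the norm form of the rank-4 lattice with Gram matrix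
`[[3,0,1,1],[0,2n₁,0,0],[1,0,2n₂+1,0],[1,0,0,2n₃+1]]` equals
`x₁² + 2n₁x₂² + 2n₂x₃² + 2n₃x₄² + (x₁+x₃)² + (x₁+x₄)²` and takes values ≥ 3 on
nonzero integer vectors. -/
theorem stmt_2 (n1 n2 n3 : ℤ) (hn1 : 2 ≤ n1) (hn2 : 1 ≤ n2) (hn3 : 4 ≤ n3)
    (x1 x2 x3 x4 : ℤ) (hx : ¬(x1 = 0 ∧ x2 = 0 ∧ x3 = 0 ∧ x4 = 0)) :
    3 * x1 ^ 2 + 2 * n1 * x2 ^ 2 + (2 * n2 + 1) * x3 ^ 2 + (2 * n3 + 1) * x4 ^ 2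
        + 2 * x1 * x3 + 2 * x1 * x4
      = x1 ^ 2 + 2 * n1 * x2 ^ 2 + 2 * n2 * x3 ^ 2 + 2 * n3 * x4 ^ 2
        + (x1 + x3) ^ 2 + (x1 + x4) ^ 2 ∧
    3 ≤ 3 * x1 ^ 2 + 2 * n1 * x2 ^ 2 + (2 * n2 + 1) * x3 ^ 2 + (2 * n3 + 1) * x4 ^ 2
        + 2 * x1 * x3 + 2 * x1 * x4 := by
  refine ⟨by ring, ?_⟩
  rcases eq_or_ne x1 0 with rfl | hx1
  · have hdiag := le_mul_sq_add_mul_sq_add_mul_sq (k := 3) (by norm_num)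
      (by omega : 3 ≤ 2 * n1) (by omega : 3 ≤ 2 * n2 + 1) (by omega : 3 ≤ 2 * n3 + 1)
      (by tauto : ¬(x2 = 0 ∧ x3 = 0 ∧ x4 = 0))
    linarith
  · have hx1sq : 1 ≤ x1 ^ 2 := sq_pos_of_ne_zero hx1
    have hbracket3 := one_le_mul_sq_add_add_sq (by omega : 1 ≤ 2 * n2) hx1 x3
    have hbracket4 := one_le_mul_sq_add_add_sq (by omega : 1 ≤ 2 * n3) hx1 x4
    have hx2 := mul_nonneg (by omega : 0 ≤ 2 * n1) (sq_nonneg x2)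
    linarith
end

section
/- Let n1, n2, n3 be integers with n1 ≥ 1, n2 ≥ 1 and n3 ≥ 4. Then for every quadruple of integers (x1, x2, x3, x4), not all zero, one has 3*x1^2 + (2*n1+1)*x2^2 + (2*n2+1)*x3^2 + (2*n3+1)*x4^2 + 2*x1*x2 + 2*x1*x3 + 2*x1*x4 ≥ 3. Equivalently, this quantity equals 2*n1*x2^2 + 2*n2*x3^2 + 2*n3*x4^2 + (x1+x2)^2 + (x1+x3)^2 + (x1+x4)^2 and is at least 3 whenever (x1,x2,x3,x4) ≠ (0,0,0,0). -/
/-!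
The form is `∑ᵢ (2nᵢxᵢ² + (x₁ + xᵢ)²)` over `i = 2, 3, 4`. If `x₁ ≠ 0`, each summand is at least `1`:
it is `≥ 2` when `xᵢ ≠ 0` and equals `x₁² ≥ 1` otherwise. If `x₁ = 0`, the summands are
`(2nᵢ + 1)xᵢ²`, and one of them is at least `3`.
-/

lemma Int.one_le_sq_of_ne_zero {a : ℤ} (ha : a ≠ 0) : 1 ≤ a ^ 2 :=
  (one_le_sq_iff_one_le_abs a).mpr (Int.one_le_abs ha)

lemma one_le_two_mul_mul_sq_add_sq {n a b : ℤ} (hn : 1 ≤ n) (ha : a ≠ 0) :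
    1 ≤ 2 * n * b ^ 2 + (a + b) ^ 2 := by
  rcases eq_or_ne b 0 with rfl | hb
  · simpa using Int.one_le_sq_of_ne_zero ha
  · nlinarith [Int.one_le_sq_of_ne_zero hb, sq_nonneg (a + b)]

lemma three_le_two_mul_add_one_mul_sq {n b : ℤ} (hn : 1 ≤ n) (hb : b ≠ 0) :
    3 ≤ (2 * n + 1) * b ^ 2 := by
  nlinarith [Int.one_le_sq_of_ne_zero hb]

/-- Case 4 of Lemma 3.3: the norm form of the rank-4 lattice with Gram matrix
`[[3,1,1,1],[1,2n₁+1,0,0],[1,0,2n₂+1,0],[1,0,0,2n₃+1]]` equals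
`2n₁x₂² + 2n₂x₃² + 2n₃x₄² + (x₁+x₂)² + (x₁+x₃)² + (x₁+x₄)²` and takes values
≥ 3 on nonzero integer vectors. -/
theorem stmt_3 (n1 n2 n3 : ℤ) (hn1 : 1 ≤ n1) (hn2 : 1 ≤ n2) (hn3 : 4 ≤ n3)
    (x1 x2 x3 x4 : ℤ) (hx : ¬(x1 = 0 ∧ x2 = 0 ∧ x3 = 0 ∧ x4 = 0)) :
    3 * x1 ^ 2 + (2 * n1 + 1) * x2 ^ 2 + (2 * n2 + 1) * x3 ^ 2 + (2 * n3 + 1) * x4 ^ 2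
        + 2 * x1 * x2 + 2 * x1 * x3 + 2 * x1 * x4
      = 2 * n1 * x2 ^ 2 + 2 * n2 * x3 ^ 2 + 2 * n3 * x4 ^ 2
        + (x1 + x2) ^ 2 + (x1 + x3) ^ 2 + (x1 + x4) ^ 2 ∧
    3 ≤ 3 * x1 ^ 2 + (2 * n1 + 1) * x2 ^ 2 + (2 * n2 + 1) * x3 ^ 2 + (2 * n3 + 1) * x4 ^ 2
        + 2 * x1 * x2 + 2 * x1 * x3 + 2 * x1 * x4 := by
  refine ⟨by ring, ?_⟩
  have hn3' : 1 ≤ n3 := by linarith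
  rcases eq_or_ne x1 0 with rfl | hx1
  · have h2 : 0 ≤ (2 * n1 + 1) * x2 ^ 2 := by positivity
    have h3 : 0 ≤ (2 * n2 + 1) * x3 ^ 2 := by positivity
    have h4 : 0 ≤ (2 * n3 + 1) * x4 ^ 2 := by positivity
    obtain h | h | h : x2 ≠ 0 ∨ x3 ≠ 0 ∨ x4 ≠ 0 := by tauto
    · linarith [three_le_two_mul_add_one_mul_sq hn1 h]
    · linarith [three_le_two_mul_add_one_mul_sq hn2 h]
    · linarith [three_le_two_mul_add_one_mul_sq hn3' h]
  · linarith [one_le_two_mul_mul_sq_add_sq (b := x2) hn1 hx1,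
      one_le_two_mul_mul_sq_add_sq (b := x3) hn2 hx1, one_le_two_mul_mul_sq_add_sq (b := x4) hn3' hx1]
end

section
/- Let n1, n2 be integers with n1 ≥ 2 and n2 ≥ 2, and let m3, m4 be integers with m3 ≥ 2 and m4 ≥ 2. Then the real symmetric 5×5 matrix [[3,0,0,0,0],[0,2n1,0,0,0],[0,0,2n2,0,0],[0,0,0,2*m3^2,m3*m4],[0,0,0,m3*m4,2*m4^2]] is positive definite, and for every quintuple of integers (x1,...,x5), not all zero, one has 3*x1^2 + 2*n1*x2^2 + 2*n2*x3^2 + 2*m3^2*x4^2 + 2*m3*m4*x4*x5 + 2*m4^2*x5^2 ≥ 3. -/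
/-!
The norm form splits as `3x₁² + 2n₁x₂² + 2n₂x₃² + A(m₃x₄, m₄x₅)`, where
`A(u, v) = 2u² + 2uv + 2v² = u² + v² + (u + v)²` is the norm form of `A₂`.
Hence `A(u, v) ≥ max(u², v²)`, all four summands are nonnegative, and a nonzero
coordinate makes its own summand positive; over `ℤ` that summand is even `≥ 3`,
because `2n₁, 2n₂ ≥ 4` and `(m₃x₄)², (m₄x₅)² ≥ 4` as soon as `x₄` resp. `x₅` is nonzero.
-/

open Matrix

section GramForm

variable {R : Type*} [CommRing R]

/-- The norm form of the root lattice `A₂`, whose Gram matrix is `!![2, 1; 1, 2]`. -/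
def a2NormForm (u v : R) : R := 2 * u ^ 2 + 2 * u * v + 2 * v ^ 2

theorem a2NormForm_eq_sum_sq (u v : R) : a2NormForm u v = u ^ 2 + v ^ 2 + (u + v) ^ 2 := by
  unfold a2NormForm; ring

/-- The norm form of the lattice `⟨h², α₁, α₂, m₃a₁, m₄a₂⟩` in the coordinates of that basis. -/
def gramForm (n1 n2 m3 m4 x1 x2 x3 x4 x5 : R) : R :=
  3 * x1 ^ 2 + 2 * n1 * x2 ^ 2 + 2 * n2 * x3 ^ 2 + a2NormForm (m3 * x4) (m4 * x5)

def gramMatrix (n1 n2 m3 m4 : R) : Matrix (Fin 5) (Fin 5) R :=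
  !![3, 0, 0, 0, 0;
     0, 2 * n1, 0, 0, 0;
     0, 0, 2 * n2, 0, 0;
     0, 0, 0, 2 * m3 ^ 2, m3 * m4;
     0, 0, 0, m3 * m4, 2 * m4 ^ 2]

theorem gramMatrix_isSymm (n1 n2 m3 m4 : R) : (gramMatrix n1 n2 m3 m4).IsSymm := by
  ext i j
  fin_cases i <;> fin_cases j <;> simp [gramMatrix, mul_comm]

theorem dotProduct_gramMatrix_mulVec (n1 n2 m3 m4 : R) (x : Fin 5 → R) :
    x ⬝ᵥ (gramMatrix n1 n2 m3 m4 *ᵥ x) = gramForm n1 n2 m3 m4 (x 0) (x 1) (x 2) (x 3) (x 4) := by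
  simp [gramMatrix, gramForm, a2NormForm, dotProduct, Fin.sum_univ_five]
  ring

variable [LinearOrder R] [IsStrictOrderedRing R]

theorem sq_le_a2NormForm_left (u v : R) : u ^ 2 ≤ a2NormForm u v := by
  rw [a2NormForm_eq_sum_sq]; nlinarith [sq_nonneg v, sq_nonneg (u + v)]

theorem sq_le_a2NormForm_right (u v : R) : v ^ 2 ≤ a2NormForm u v := by
  rw [a2NormForm_eq_sum_sq]; nlinarith [sq_nonneg u, sq_nonneg (u + v)]

theorem le_gramForm {n1 n2 : R} (m3 m4 x1 x2 x3 x4 x5 : R) (hn1 : 0 ≤ n1) (hn2 : 0 ≤ n2) :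
    let F := gramForm n1 n2 m3 m4 x1 x2 x3 x4 x5
    3 * x1 ^ 2 ≤ F ∧ 2 * n1 * x2 ^ 2 ≤ F ∧ 2 * n2 * x3 ^ 2 ≤ F ∧
      (m3 * x4) ^ 2 ≤ F ∧ (m4 * x5) ^ 2 ≤ F := by
  have h1 : 0 ≤ 3 * x1 ^ 2 := by positivity
  have h2 : 0 ≤ 2 * n1 * x2 ^ 2 := by positivity
  have h3 : 0 ≤ 2 * n2 * x3 ^ 2 := by positivity
  have h4 := sq_le_a2NormForm_left (m3 * x4) (m4 * x5)
  have h5 := sq_le_a2NormForm_right (m3 * x4) (m4 * x5)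
  have hA : 0 ≤ a2NormForm (m3 * x4) (m4 * x5) := (sq_nonneg _).trans h4
  refine ⟨?_, ?_, ?_, ?_, ?_⟩ <;> (unfold gramForm; linarith)

theorem gramForm_pos {n1 n2 m3 m4 x1 x2 x3 x4 x5 : R} (hn1 : 0 < n1) (hn2 : 0 < n2)
    (hm3 : m3 ≠ 0) (hm4 : m4 ≠ 0) (hx : ¬(x1 = 0 ∧ x2 = 0 ∧ x3 = 0 ∧ x4 = 0 ∧ x5 = 0)) :
    0 < gramForm n1 n2 m3 m4 x1 x2 x3 x4 x5 := by
  obtain ⟨h1, h2, h3, h4, h5⟩ := le_gramForm m3 m4 x1 x2 x3 x4 x5 hn1.le hn2.le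
  simp only [not_and_or] at hx
  rcases hx with hx | hx | hx | hx | hx
  · exact h1.trans_lt' (by positivity)
  · exact h2.trans_lt' (by positivity)
  · exact h3.trans_lt' (by positivity)
  · exact h4.trans_lt' (by positivity)
  · exact h5.trans_lt' (by positivity)

theorem gramMatrix_posDef [StarRing R] [TrivialStar R] {n1 n2 m3 m4 : R} (hn1 : 0 < n1)
    (hn2 : 0 < n2) (hm3 : m3 ≠ 0) (hm4 : m4 ≠ 0) : (gramMatrix n1 n2 m3 m4).PosDef := by
  refine .of_dotProduct_mulVec_pos (isHermitian_iff_isSymm.mpr (gramMatrix_isSymm ..))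
    fun x hx ↦ ?_
  rw [star_trivial, dotProduct_gramMatrix_mulVec]
  exact gramForm_pos hn1 hn2 hm3 hm4 fun ⟨h0, h1, h2, h3, h4⟩ ↦
    hx (funext fun i ↦ by fin_cases i <;> assumption)

end GramForm

theorem le_mul_sq_of_ne_zero_s4 {c y : ℤ} (hc : 0 ≤ c) (hy : y ≠ 0) : c ≤ c * y ^ 2 :=
  le_mul_of_one_le_right hc ((one_le_sq_iff_one_le_abs y).mpr (Int.one_le_abs hy))

theorem three_le_gramForm {n1 n2 m3 m4 x1 x2 x3 x4 x5 : ℤ} (hn1 : 2 ≤ n1) (hn2 : 2 ≤ n2)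
    (hm3 : 2 ≤ |m3|) (hm4 : 2 ≤ |m4|) (hx : ¬(x1 = 0 ∧ x2 = 0 ∧ x3 = 0 ∧ x4 = 0 ∧ x5 = 0)) :
    3 ≤ gramForm n1 n2 m3 m4 x1 x2 x3 x4 x5 := by
  obtain ⟨h1, h2, h3, h4, h5⟩ := le_gramForm m3 m4 x1 x2 x3 x4 x5
    (zero_le_two.trans hn1) (zero_le_two.trans hn2)
  have hm3' : 3 ≤ m3 ^ 2 := by nlinarith [sq_abs m3]
  have hm4' : 3 ≤ m4 ^ 2 := by nlinarith [sq_abs m4]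
  simp only [not_and_or] at hx
  rcases hx with hx | hx | hx | hx | hx
  · linarith [le_mul_sq_of_ne_zero_s4 (c := 3) (by norm_num) hx]
  · linarith [le_mul_sq_of_ne_zero_s4 (c := 2 * n1) (by linarith) hx]
  · linarith [le_mul_sq_of_ne_zero_s4 (c := 2 * n2) (by linarith) hx]
  · linarith [mul_pow m3 x4 2, le_mul_sq_of_ne_zero_s4 (sq_nonneg m3) hx]
  · linarith [mul_pow m4 x5 2, le_mul_sq_of_ne_zero_s4 (sq_nonneg m4) hx]

/-- Case n = 4 of Proposition 3.5: the Gram matrix of the rank-5 lattice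
`⟨h², α₁, α₂, m₃·a₁, m₄·a₂⟩` is positive definite, and its norm form takes
values ≥ 3 on nonzero integer vectors. -/
theorem stmt_4 (n1 n2 m3 m4 : ℤ) (hn1 : 2 ≤ n1) (hn2 : 2 ≤ n2)
    (hm3 : 2 ≤ m3) (hm4 : 2 ≤ m4) :
    (!![(3 : ℝ), 0, 0, 0, 0;
        0, 2 * (n1 : ℝ), 0, 0, 0;
        0, 0, 2 * (n2 : ℝ), 0, 0;
        0, 0, 0, 2 * (m3 : ℝ) ^ 2, (m3 : ℝ) * (m4 : ℝ);
        0, 0, 0, (m3 : ℝ) * (m4 : ℝ), 2 * (m4 : ℝ) ^ 2]).PosDef ∧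
    ∀ x1 x2 x3 x4 x5 : ℤ, ¬(x1 = 0 ∧ x2 = 0 ∧ x3 = 0 ∧ x4 = 0 ∧ x5 = 0) →
      3 ≤ 3 * x1 ^ 2 + 2 * n1 * x2 ^ 2 + 2 * n2 * x3 ^ 2 + 2 * m3 ^ 2 * x4 ^ 2
          + 2 * m3 * m4 * x4 * x5 + 2 * m4 ^ 2 * x5 ^ 2 := by
  have hn1' : (0 : ℝ) < n1 := by exact_mod_cast hn1.trans_lt' two_pos
  have hn2' : (0 : ℝ) < n2 := by exact_mod_cast hn2.trans_lt' two_pos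
  have hm3' : (m3 : ℝ) ≠ 0 := by exact_mod_cast (hm3.trans_lt' two_pos).ne'
  have hm4' : (m4 : ℝ) ≠ 0 := by exact_mod_cast (hm4.trans_lt' two_pos).ne'
  refine ⟨gramMatrix_posDef hn1' hn2' hm3' hm4', fun x1 x2 x3 x4 x5 hx ↦ ?_⟩
  refine (three_le_gramForm hn1 hn2 (hm3.trans (le_abs_self m3))
    (hm4.trans (le_abs_self m4)) hx).trans_eq ?_
  simp only [gramForm, a2NormForm]
  ring
end

section
/- Let n1, n2 be integers with n1 ≥ 2 and n2 ≥ 2, and let m3, m4 be integers with m3 ≥ 2 and m4 ≥ 2. Then for every quintuple of integers (x1,...,x5), not all zero, one has 3*x1^2 + 2*n1*x2^2 + 2*n2*x3^2 + (2*m3^2+1)*x4^2 + (2*m4^2+1)*x5^2 + 2*m3*m4*x4*x5 + 2*x1*x4 + 2*x1*x5 ≥ 3. Equivalently, this quantity equals x1^2 + 2*n1*x2^2 + 2*n2*x3^2 + m3^2*x4^2 + m4^2*x5^2 + (m3*x4 + m4*x5)^2 + (x1+x4)^2 + (x1+x5)^2 and is at least 3 whenever (x1,...,x5) ≠ 0.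 -/
/-! Written as `x₁² + 2n₁x₂² + 2n₂x₃² + m₃²x₄² + m₄²x₅² + (m₃x₄ + m₄x₅)² + (x₁ + x₄)² + (x₁ + x₅)²`,
the form is a sum of nonnegative terms. A nonzero `x₂` or `x₃` already contributes
`2nᵢxᵢ² ≥ 4`, a nonzero `x₄` or `x₅` contributes `mᵢ²xᵢ² ≥ 4`, and if only `x₁` is nonzero
the form is `3x₁² ≥ 3`. -/

lemma Int.one_le_sq_of_ne_zero_s6 {b : ℤ} (hb : b ≠ 0) : 1 ≤ b ^ 2 :=
  (one_le_sq_iff_one_le_abs b).mpr (Int.one_le_abs hb)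

lemma Int.four_le_two_mul_mul_sq {n b : ℤ} (hn : 2 ≤ n) (hb : b ≠ 0) : 4 ≤ 2 * n * b ^ 2 := by
  nlinarith [Int.one_le_sq_of_ne_zero_s6 hb]

lemma Int.four_le_sq_mul_sq {m b : ℤ} (hm : 2 ≤ m) (hb : b ≠ 0) : 4 ≤ m ^ 2 * b ^ 2 := by
  nlinarith [Int.one_le_sq_of_ne_zero_s6 hb]

lemma three_le_weighted_sum_sq {n1 n2 m3 m4 : ℤ} (hn1 : 2 ≤ n1) (hn2 : 2 ≤ n2)
    (hm3 : 2 ≤ m3) (hm4 : 2 ≤ m4) {x1 x2 x3 x4 x5 : ℤ}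
    (hx : ¬(x1 = 0 ∧ x2 = 0 ∧ x3 = 0 ∧ x4 = 0 ∧ x5 = 0)) :
    3 ≤ x1 ^ 2 + 2 * n1 * x2 ^ 2 + 2 * n2 * x3 ^ 2 + m3 ^ 2 * x4 ^ 2 + m4 ^ 2 * x5 ^ 2
        + (m3 * x4 + m4 * x5) ^ 2 + (x1 + x4) ^ 2 + (x1 + x5) ^ 2 := by
  have h2 : 0 ≤ 2 * n1 * x2 ^ 2 := by positivity
  have h3 : 0 ≤ 2 * n2 * x3 ^ 2 := by positivity
  have h4 : 0 ≤ m3 ^ 2 * x4 ^ 2 := by positivity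
  have h5 : 0 ≤ m4 ^ 2 * x5 ^ 2 := by positivity
  have hrest := add_nonneg (add_nonneg (sq_nonneg x1) (sq_nonneg (m3 * x4 + m4 * x5)))
    (add_nonneg (sq_nonneg (x1 + x4)) (sq_nonneg (x1 + x5)))
  rcases ne_or_eq x2 0 with hx2 | rfl
  · linarith [Int.four_le_two_mul_mul_sq hn1 hx2]
  rcases ne_or_eq x3 0 with hx3 | rfl
  · linarith [Int.four_le_two_mul_mul_sq hn2 hx3]
  rcases ne_or_eq x4 0 with hx4 | rfl
  · linarith [Int.four_le_sq_mul_sq hm3 hx4]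
  rcases ne_or_eq x5 0 with hx5 | rfl
  · linarith [Int.four_le_sq_mul_sq hm4 hx5]
  have hx1 : x1 ≠ 0 := fun h => hx ⟨h, rfl, rfl, rfl, rfl⟩
  nlinarith [Int.one_le_sq_of_ne_zero_s6 hx1]

/-- Case 3 of the case n = 4 of Theorem 3.7: the norm form of the rank-5 lattice
with Gram matrix `[[3,0,0,1,1],[0,2n₁,0,0,0],[0,0,2n₂,0,0],[1,0,0,2m₃²+1,m₃m₄],
[1,0,0,m₃m₄,2m₄²+1]]` equals
`x₁² + 2n₁x₂² + 2n₂x₃² + m₃²x₄² + m₄²x₅² + (m₃x₄+m₄x₅)² + (x₁+x₄)² + (x₁+x₅)²`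
and takes values ≥ 3 on nonzero integer vectors. -/
theorem stmt_6 (n1 n2 m3 m4 : ℤ) (hn1 : 2 ≤ n1) (hn2 : 2 ≤ n2)
    (hm3 : 2 ≤ m3) (hm4 : 2 ≤ m4)
    (x1 x2 x3 x4 x5 : ℤ) (hx : ¬(x1 = 0 ∧ x2 = 0 ∧ x3 = 0 ∧ x4 = 0 ∧ x5 = 0)) :
    3 * x1 ^ 2 + 2 * n1 * x2 ^ 2 + 2 * n2 * x3 ^ 2 + (2 * m3 ^ 2 + 1) * x4 ^ 2
        + (2 * m4 ^ 2 + 1) * x5 ^ 2 + 2 * m3 * m4 * x4 * x5 + 2 * x1 * x4 + 2 * x1 * x5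
      = x1 ^ 2 + 2 * n1 * x2 ^ 2 + 2 * n2 * x3 ^ 2 + m3 ^ 2 * x4 ^ 2 + m4 ^ 2 * x5 ^ 2
        + (m3 * x4 + m4 * x5) ^ 2 + (x1 + x4) ^ 2 + (x1 + x5) ^ 2 ∧
    3 ≤ 3 * x1 ^ 2 + 2 * n1 * x2 ^ 2 + 2 * n2 * x3 ^ 2 + (2 * m3 ^ 2 + 1) * x4 ^ 2
        + (2 * m4 ^ 2 + 1) * x5 ^ 2 + 2 * m3 * m4 * x4 * x5 + 2 * x1 * x4
        + 2 * x1 * x5 := by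
  have hsum := three_le_weighted_sum_sq hn1 hn2 hm3 hm4 hx
  exact ⟨by ring, by linarith⟩
end

section
/- Let n1, n2 be integers with n1 ≥ 1 and n2 ≥ 1, and let m3, m4 be integers with m3 ≥ 2 and m4 ≥ 2. Then for every quintuple of integers (x1,...,x5), not all zero, one has 3*x1^2 + (2*n1+1)*x2^2 + (2*n2+1)*x3^2 + (2*m3^2+1)*x4^2 + (2*m4^2+1)*x5^2 + 2*m3*m4*x4*x5 + 2*x1*x2 + 2*x1*x3 + 2*x1*x4 + 2*x1*x5 ≥ 3. Equivalently, this quantity equals 2*n1*x2^2 + 2*n2*x3^2 + m3^2*x4^2 + m4^2*x5^2 + (m3*x4 + m4*x5)^2 + (x1+x2)^2 + (x1+x3)^2 + (x1+x4)^2 + (x1+x5)^2 − x1^2 and is at least 3 whenever (x1,...,x5) ≠ 0; in particular it never takes the value 2. -/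
/-!
Dropping the nonnegative terms `2(n₁-1)x₂²`, `2(n₂-1)x₃²`, `(m₃²-2)x₄²`, `(m₄²-2)x₅²` and
`(m₃x₄+m₄x₅)²` bounds the form below by `∑ᵢ ((x₁+xᵢ)² + 2xᵢ²) - x₁²`, the sum over `i = 2,…,5`.
If `x₁ = 0` this is at least `3∑ᵢ xᵢ² ≥ 3`. Otherwise each summand satisfies
`4((x₁+xᵢ)² + 2xᵢ²) ≥ x₁² + 3`, and adding the four bounds gives the claim.
-/

lemma sq_add_three_le_four_mul_sq_add_two_mul_sq (a b : ℤ) (ha : a ≠ 0) :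
    a ^ 2 + 3 ≤ 4 * ((a + b) ^ 2 + 2 * b ^ 2) := by
  have ha2 : 0 < a ^ 2 := sq_pos_of_ne_zero ha
  rcases eq_or_ne b 0 with rfl | hb
  · linarith
  · -- `9 (4((a+b)² + 2b²) - a² - 3) = 3(3a+4b)² + 60b² - 27`
    nlinarith [sq_nonneg (3 * a + 4 * b), sq_pos_of_ne_zero hb]

lemma three_le_sum_sq_add_two_mul_sq_sub_sq (a b₁ b₂ b₃ b₄ : ℤ)
    (h : ¬(a = 0 ∧ b₁ = 0 ∧ b₂ = 0 ∧ b₃ = 0 ∧ b₄ = 0)) :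
    3 ≤ (a + b₁) ^ 2 + 2 * b₁ ^ 2 + ((a + b₂) ^ 2 + 2 * b₂ ^ 2)
      + ((a + b₃) ^ 2 + 2 * b₃ ^ 2) + ((a + b₄) ^ 2 + 2 * b₄ ^ 2) - a ^ 2 := by
  rcases eq_or_ne a 0 with rfl | ha
  · have hb : b₁ ≠ 0 ∨ b₂ ≠ 0 ∨ b₃ ≠ 0 ∨ b₄ ≠ 0 := by tauto
    rcases hb with hb | hb | hb | hb <;>
      nlinarith [sq_pos_of_ne_zero hb, sq_nonneg b₁, sq_nonneg b₂, sq_nonneg b₃, sq_nonneg b₄]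
  · linarith [sq_add_three_le_four_mul_sq_add_two_mul_sq a b₁ ha,
      sq_add_three_le_four_mul_sq_add_two_mul_sq a b₂ ha,
      sq_add_three_le_four_mul_sq_add_two_mul_sq a b₃ ha,
      sq_add_three_le_four_mul_sq_add_two_mul_sq a b₄ ha]

/-- Case 5 of the case n = 4 of Theorem 3.7: the norm form of the rank-5 lattice
with Gram matrix `[[3,1,1,1,1],[1,2n₁+1,0,0,0],[1,0,2n₂+1,0,0],[1,0,0,2m₃²+1,m₃m₄],
[1,0,0,m₃m₄,2m₄²+1]]` equals
`2n₁x₂² + 2n₂x₃² + m₃²x₄² + m₄²x₅² + (m₃x₄+m₄x₅)² + (x₁+x₂)² + (x₁+x₃)²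
 + (x₁+x₄)² + (x₁+x₅)² − x₁²`, takes values ≥ 3 on nonzero integer vectors,
and in particular never takes the value 2. -/
theorem stmt_8 (n1 n2 m3 m4 : ℤ) (hn1 : 1 ≤ n1) (hn2 : 1 ≤ n2)
    (hm3 : 2 ≤ m3) (hm4 : 2 ≤ m4)
    (x1 x2 x3 x4 x5 : ℤ) (hx : ¬(x1 = 0 ∧ x2 = 0 ∧ x3 = 0 ∧ x4 = 0 ∧ x5 = 0)) :
    3 * x1 ^ 2 + (2 * n1 + 1) * x2 ^ 2 + (2 * n2 + 1) * x3 ^ 2 + (2 * m3 ^ 2 + 1) * x4 ^ 2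
        + (2 * m4 ^ 2 + 1) * x5 ^ 2 + 2 * m3 * m4 * x4 * x5
        + 2 * x1 * x2 + 2 * x1 * x3 + 2 * x1 * x4 + 2 * x1 * x5
      = 2 * n1 * x2 ^ 2 + 2 * n2 * x3 ^ 2 + m3 ^ 2 * x4 ^ 2 + m4 ^ 2 * x5 ^ 2
        + (m3 * x4 + m4 * x5) ^ 2 + (x1 + x2) ^ 2 + (x1 + x3) ^ 2 + (x1 + x4) ^ 2
        + (x1 + x5) ^ 2 - x1 ^ 2 ∧
    3 ≤ 3 * x1 ^ 2 + (2 * n1 + 1) * x2 ^ 2 + (2 * n2 + 1) * x3 ^ 2 + (2 * m3 ^ 2 + 1) * x4 ^ 2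
        + (2 * m4 ^ 2 + 1) * x5 ^ 2 + 2 * m3 * m4 * x4 * x5
        + 2 * x1 * x2 + 2 * x1 * x3 + 2 * x1 * x4 + 2 * x1 * x5 ∧
    3 * x1 ^ 2 + (2 * n1 + 1) * x2 ^ 2 + (2 * n2 + 1) * x3 ^ 2 + (2 * m3 ^ 2 + 1) * x4 ^ 2
        + (2 * m4 ^ 2 + 1) * x5 ^ 2 + 2 * m3 * m4 * x4 * x5
        + 2 * x1 * x2 + 2 * x1 * x3 + 2 * x1 * x4 + 2 * x1 * x5 ≠ 2 := by
  have hm3sq : 0 ≤ m3 ^ 2 - 2 := by nlinarith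
  have hm4sq : 0 ≤ m4 ^ 2 - 2 := by nlinarith
  have hge : 3 ≤ 3 * x1 ^ 2 + (2 * n1 + 1) * x2 ^ 2 + (2 * n2 + 1) * x3 ^ 2
      + (2 * m3 ^ 2 + 1) * x4 ^ 2 + (2 * m4 ^ 2 + 1) * x5 ^ 2 + 2 * m3 * m4 * x4 * x5
      + 2 * x1 * x2 + 2 * x1 * x3 + 2 * x1 * x4 + 2 * x1 * x5 := by
    linarith [three_le_sum_sq_add_two_mul_sq_sub_sq x1 x2 x3 x4 x5 hx,
      mul_nonneg (sub_nonneg.2 hn1) (sq_nonneg x2), mul_nonneg (sub_nonneg.2 hn2) (sq_nonneg x3),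
      mul_nonneg hm3sq (sq_nonneg x4), mul_nonneg hm4sq (sq_nonneg x5), sq_nonneg (m3 * x4 + m4 * x5)]
  exact ⟨by ring, hge, by omega⟩
end

section
/- Let n1, n2 be integers with n1 ≥ 1 and n2 ≥ 1, and let m3, m4 be integers with m3 ≥ 1 and m4 ≥ 1. Then the real symmetric 5×5 matrix [[3,1,1,1,1],[1,2n1+1,0,0,0],[1,0,2n2+1,0,0],[1,0,0,2m3^2+1,m3*m4],[1,0,0,m3*m4,2m4^2+1]] is positive definite. -/
/-! The quadratic form of the matrix is the sum of squares
`x₀² + ½ ∑ᵢ (x₀ + 2xᵢ)² + (a - 2)x₁² + (b - 2)x₂² + (c² - 1)x₃² + (d² - 1)x₄² + (c x₃ + d x₄)²`,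
in which every term is nonnegative and the first two alone vanish only at `x = 0`. -/

open Matrix

namespace Case5

def gram (a b c d : ℝ) : Matrix (Fin 5) (Fin 5) ℝ :=
  !![3, 1, 1, 1, 1;
     1, a, 0, 0, 0;
     1, 0, b, 0, 0;
     1, 0, 0, 2 * c ^ 2 + 1, c * d;
     1, 0, 0, c * d, 2 * d ^ 2 + 1]

theorem gram_isHermitian (a b c d : ℝ) : (gram a b c d).IsHermitian := by
  ext i j
  fin_cases i <;> fin_cases j <;> simp [gram, mul_comm]

theorem dotProduct_gram_mulVec (a b c d : ℝ) (x : Fin 5 → ℝ) :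
    x ⬝ᵥ gram a b c d *ᵥ x =
      x 0 ^ 2 + ((x 0 + 2 * x 1) ^ 2 + (x 0 + 2 * x 2) ^ 2 + (x 0 + 2 * x 3) ^ 2
          + (x 0 + 2 * x 4) ^ 2) / 2
        + (a - 2) * x 1 ^ 2 + (b - 2) * x 2 ^ 2 + (c ^ 2 - 1) * x 3 ^ 2
        + (d ^ 2 - 1) * x 4 ^ 2 + (c * x 3 + d * x 4) ^ 2 := by
  simp only [dotProduct, mulVec, gram, of_apply, cons_val', cons_val_fin_one, Fin.sum_univ_five,
    cons_val_zero, cons_val_one, cons_val, one_mul, zero_mul, add_zero]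
  ring

theorem sq_add_sum_sq_pos {x : Fin 5 → ℝ} (hx : x ≠ 0) :
    0 < x 0 ^ 2 + ((x 0 + 2 * x 1) ^ 2 + (x 0 + 2 * x 2) ^ 2 + (x 0 + 2 * x 3) ^ 2
        + (x 0 + 2 * x 4) ^ 2) / 2 := by
  by_contra! hle
  have h0 : x 0 = 0 := by
    nlinarith [sq_nonneg (x 0 + 2 * x 1), sq_nonneg (x 0 + 2 * x 2),
      sq_nonneg (x 0 + 2 * x 3), sq_nonneg (x 0 + 2 * x 4)]
  refine hx (funext fun i => ?_)
  rw [h0] at hle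
  fin_cases i <;> simp only [Fin.zero_eta, Fin.mk_one, Fin.reduceFinMk, Pi.zero_apply, h0] <;>
    nlinarith [sq_nonneg (x 1), sq_nonneg (x 2), sq_nonneg (x 3), sq_nonneg (x 4)]

theorem gram_posDef {a b c d : ℝ} (ha : 2 ≤ a) (hb : 2 ≤ b) (hc : 1 ≤ c ^ 2) (hd : 1 ≤ d ^ 2) :
    (gram a b c d).PosDef := by
  refine .of_dotProduct_mulVec_pos (gram_isHermitian a b c d) fun x hx => ?_
  rw [star_trivial, dotProduct_gram_mulVec]
  linarith [sq_add_sum_sq_pos hx, sq_nonneg (c * x 3 + d * x 4),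
    mul_nonneg (sub_nonneg.2 ha) (sq_nonneg (x 1)), mul_nonneg (sub_nonneg.2 hb) (sq_nonneg (x 2)),
    mul_nonneg (sub_nonneg.2 hc) (sq_nonneg (x 3)), mul_nonneg (sub_nonneg.2 hd) (sq_nonneg (x 4))]

end Case5

/-- The Gram matrix of the rank-5 lattice constructed in Case 5 of the case
n = 4 of Theorem 3.7 is positive definite (as a real symmetric matrix), for all
integers `n₁, n₂ ≥ 1` and `m₃, m₄ ≥ 1`. -/
theorem stmt_17 (n1 n2 m3 m4 : ℤ) (hn1 : 1 ≤ n1) (hn2 : 1 ≤ n2)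
    (hm3 : 1 ≤ m3) (hm4 : 1 ≤ m4) :
    (!![(3 : ℝ), 1, 1, 1, 1;
        1, 2 * (n1 : ℝ) + 1, 0, 0, 0;
        1, 0, 2 * (n2 : ℝ) + 1, 0, 0;
        1, 0, 0, 2 * (m3 : ℝ) ^ 2 + 1, (m3 : ℝ) * (m4 : ℝ);
        1, 0, 0, (m3 : ℝ) * (m4 : ℝ), 2 * (m4 : ℝ) ^ 2 + 1]).PosDef := by
  have hn1' : (1 : ℝ) ≤ n1 := by exact_mod_cast hn1
  have hn2' : (1 : ℝ) ≤ n2 := by exact_mod_cast hn2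
  have hm3' : (1 : ℝ) ≤ m3 := by exact_mod_cast hm3
  have hm4' : (1 : ℝ) ≤ m4 := by exact_mod_cast hm4
  exact Case5.gram_posDef (by linarith) (by linarith) (one_le_pow₀ hm3') (one_le_pow₀ hm4')
end
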